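/- Let V_1, V_2 be nonzero subspaces of R^n. There exists a constant κ depending only on V_1 and V_2 such that every nonzero point x of R^n satisfies dist(x, V_1 ∩ V_2) ≤ κ·max{dist(x,V_1), dist(x,V_2)}, with the convention that the left-hand side equals 1 when V_1 ∩ V_2 = {0}. -/

import Mathlib

open scoped BigOperators

noncomputable def projDist {n : ℕ} (x y : EuclideanSpace ℝ (Fin n)) : ℝ :=
  Real.sqrt (‖x‖^2 * ‖y‖^2 - (inner ℝ x y : ℝ)^2) / (‖x‖ * ‖y‖)

noncomputable def distToSub {n : ℕ} (x : EuclideanSpace ℝ (Fin n))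
    (V : Submodule ℝ (EuclideanSpace ℝ (Fin n))) : ℝ :=
  ‖(Vᗮ.orthogonalProjection x : EuclideanSpace ℝ (Fin n))‖ / ‖x‖

noncomputable def subDist {n : ℕ} (W V : Submodule ℝ (EuclideanSpace ℝ (Fin n))) : ℝ :=
  sSup {d : ℝ | ∃ x ∈ W, x ≠ 0 ∧ d = distToSub x V}

noncomputable def gramVol {n : ℕ} {ι : Type*} [Fintype ι] [DecidableEq ι]
    (v : ι → EuclideanSpace ℝ (Fin n)) : ℝ :=
  Real.sqrt (Matrix.det (Matrix.of fun i j => (inner ℝ (v i) (v j) : ℝ)))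

noncomputable def Theta {n : ℕ} {ι : Type*} [Fintype ι] [DecidableEq ι]
    (v : ι → EuclideanSpace ℝ (Fin n)) : ℝ :=
  gramVol v / ∏ i, ‖v i‖

def IsIntPt {n : ℕ} (x : EuclideanSpace ℝ (Fin n)) : Prop := ∀ i, ∃ k : ℤ, x i = (k : ℝ)

noncomputable def toE {n : ℕ} (x : Fin n → ℤ) : EuclideanSpace ℝ (Fin n) :=
  (WithLp.equiv 2 (Fin n → ℝ)).symm (fun i => (x i : ℝ))

/-!
On `(ker f)ᗮ` an injective linear map `f` out of a finite-dimensional space is anti-Lipschitz,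
and `f x` only depends on the component of `x` in `(ker f)ᗮ`. Applied to
`x ↦ (P_{V₁ᗮ} x, P_{V₂ᗮ} x)`, whose kernel is `V₁ ⊓ V₂` and whose sup norm is the maximum in the
statement, this bounds `‖P_{(V₁ ⊓ V₂)ᗮ} x‖` by a multiple of that maximum; dividing by `‖x‖`
gives the claim, and when `V₁ ⊓ V₂ = ⊥` the left side `dist(x, ⊥)` is already `1`.
-/

open Submodule

section

variable {𝕜 E F : Type*} [RCLike 𝕜] [NormedAddCommGroup E] [InnerProductSpace 𝕜 E]
  [FiniteDimensional 𝕜 E] [NormedAddCommGroup F] [NormedSpace 𝕜 F]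

theorem ContinuousLinearMap.exists_norm_starProjection_orthogonal_ker_le (f : E →L[𝕜] F) :
    ∃ C, ∀ x, ‖f.kerᗮ.starProjection x‖ ≤ C * ‖f x‖ := by
  have hinj : LinearMap.ker ((f : E →ₗ[𝕜] F).domRestrict f.kerᗮ) = ⊥ := by
    rw [LinearMap.ker_eq_bot, LinearMap.injective_domRestrict_iff]
    exact f.ker.orthogonal_disjoint.symm
  obtain ⟨C, -, hC⟩ := LinearMap.exists_antilipschitzWith _ hinj
  refine ⟨C, fun x => ?_⟩
  have hfx : f (f.kerᗮ.starProjection x) = f x := by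
    rw [starProjection_orthogonal_val, map_sub, sub_eq_self]
    exact f.ker.starProjection_apply_mem x
  calc ‖f.kerᗮ.starProjection x‖ = ‖f.kerᗮ.orthogonalProjectionOnto x‖ := rfl
    _ ≤ C * ‖f (f.kerᗮ.starProjection x)‖ :=
      ZeroHomClass.bound_of_antilipschitz _ hC (f.kerᗮ.orthogonalProjectionOnto x)
    _ = C * ‖f x‖ := by rw [hfx]

theorem Submodule.exists_norm_starProjection_orthogonal_inf_le (V₁ V₂ : Submodule 𝕜 E) :
    ∃ C, ∀ x, ‖(V₁ ⊓ V₂)ᗮ.starProjection x‖ ≤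
      C * max ‖V₁ᗮ.starProjection x‖ ‖V₂ᗮ.starProjection x‖ := by
  have hker : (V₁ᗮ.starProjection.prod V₂ᗮ.starProjection).ker = V₁ ⊓ V₂ := by
    rw [ContinuousLinearMap.ker_prod, ker_starProjection, ker_starProjection,
      orthogonal_orthogonal, orthogonal_orthogonal]
  simpa [hker] using
    (V₁ᗮ.starProjection.prod V₂ᗮ.starProjection).exists_norm_starProjection_orthogonal_ker_le

end

theorem distToSub_eq {n : ℕ} (x : EuclideanSpace ℝ (Fin n))
    (V : Submodule ℝ (EuclideanSpace ℝ (Fin n))) :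
    distToSub x V = ‖Vᗮ.starProjection x‖ / ‖x‖ := rfl

theorem distToSub_bot {n : ℕ} {x : EuclideanSpace ℝ (Fin n)} (hx : x ≠ 0) :
    distToSub x ⊥ = 1 := by
  rw [distToSub_eq, starProjection_orthogonal_val, starProjection_bot,
    zero_apply, sub_zero, div_self (norm_ne_zero_iff.mpr hx)]

open scoped Classical in
theorem stmt4_general {n : ℕ} (V₁ V₂ : Submodule ℝ (EuclideanSpace ℝ (Fin n))) :
    ∃ κ : ℝ, ∀ x : EuclideanSpace ℝ (Fin n), x ≠ 0 →
      (if V₁ ⊓ V₂ = ⊥ then (1 : ℝ) else distToSub x (V₁ ⊓ V₂)) ≤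
        κ * max (distToSub x V₁) (distToSub x V₂) := by
  obtain ⟨C, hC⟩ := V₁.exists_norm_starProjection_orthogonal_inf_le V₂
  refine ⟨C, fun x hx => ?_⟩
  have hdist : distToSub x (V₁ ⊓ V₂) ≤ C * max (distToSub x V₁) (distToSub x V₂) := by
    rw [distToSub_eq, distToSub_eq, distToSub_eq, max_div_div_right (norm_nonneg x),
      ← mul_div_assoc]
    gcongr
    exact hC x
  split_ifs with hbot
  · rwa [← distToSub_bot hx, ← hbot]
  · exact hdist

open scoped Classical in
theorem stmt4 {n : ℕ} (V₁ V₂ : Submodule ℝ (EuclideanSpace ℝ (Fin n)))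
    (h₁ : V₁ ≠ ⊥) (h₂ : V₂ ≠ ⊥) :
    ∃ κ : ℝ, ∀ x : EuclideanSpace ℝ (Fin n), x ≠ 0 →
      (if V₁ ⊓ V₂ = ⊥ then (1 : ℝ) else distToSub x (V₁ ⊓ V₂)) ≤
        κ * max (distToSub x V₁) (distToSub x V₂) :=
  stmt4_general V₁ V₂
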